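/- Bulk equivalence implies INQML-equivalence of states: if for every w ∈ s there is w' ∈ s' with M,{w} and M',{w'} supporting the same INQML formulas, and vice versa, then M,s ⊨ φ iff M',s' ⊨ φ for all INQML formulas φ with ♭(φ) = 0 (the flat, grade-0 formulas). -/
import Mathlib


inductive InqForm (P : Type) : Type
  | atom : P → InqForm P
  | bot : InqForm P
  | and : InqForm P → InqForm P → InqForm P
  | impl : InqForm P → InqForm P → InqForm P
  | ior : InqForm P → InqForm P → InqForm P
  | box : InqForm P → InqForm P
  | boxplus : InqForm P → InqForm P

/-- A pseudo-model: worlds `W`, inquisitive assignment `Sig` (nonempty valued),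
propositional valuation `V`. -/
structure PseudoModel (P W : Type) where
  Sig : W → Set (Set W)
  Sig_nonempty : ∀ w, (Sig w).Nonempty
  V : P → Set W

/-- The associated modal assignment σ(w) = ⋃ Σ(w). -/
def PseudoModel.sigma {P W : Type} (M : PseudoModel P W) (w : W) : Set W :=
  ⋃₀ M.Sig w

/-- Support semantics of INQML over pseudo-models. -/
def support {P W : Type} (M : PseudoModel P W) : InqForm P → Set W → Prop
  | .atom p, s => s ⊆ M.V p
  | .bot, s => s = ∅
  | .and φ ψ, s => support M φ s ∧ support M ψ s
  | .impl φ ψ, s => ∀ t ⊆ s, support M φ t → support M ψ t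
  | .ior φ ψ, s => support M φ s ∨ support M ψ s
  | .box φ, s => ∀ w ∈ s, support M φ (M.sigma w)
  | .boxplus φ, s => ∀ w ∈ s, ∀ t ∈ M.Sig w, support M φ t

/-- The flatness grade ♭(φ). -/
def flatGrade {P : Type} : InqForm P → ℕ
  | .atom _ => 0
  | .bot => 0
  | .and φ ψ => max (flatGrade φ) (flatGrade ψ)
  | .impl _ ψ => flatGrade ψ
  | .ior φ ψ => flatGrade φ + flatGrade ψ + 1
  | .box _ => 0
  | .boxplus _ => 0

/-- Downward closure of a family of information states. -/
def downClose {W : Type} (Pi : Set (Set W)) : Set (Set W) :=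
  {t | ∃ s ∈ Pi, t ⊆ s}

theorem support_persist {P W : Type} (M : PseudoModel P W) :
    ∀ (φ : InqForm P) (s t : Set W), t ⊆ s → support M φ s → support M φ t := by
  intro φ
  induction φ with
  | atom p => intro s t hts h; exact hts.trans h
  | bot => intro s t hts h; subst h; exact Set.subset_eq_empty hts rfl
  | and φ ψ ihφ ihψ => intro s t hts h; exact ⟨ihφ s t hts h.1, ihψ s t hts h.2⟩
  | impl φ ψ ihφ ihψ => intro s t hts h u hu hφ; exact h u (hu.trans hts) hφ
  | ior φ ψ ihφ ihψ =>
      intro s t hts h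
      rcases h with h | h
      · exact Or.inl (ihφ s t hts h)
      · exact Or.inr (ihψ s t hts h)
  | box φ ih => intro s t hts h w hw; exact h w (hts hw)
  | boxplus φ ih => intro s t hts h w hw; exact h w (hts hw)

theorem support_flat {P W : Type} (M : PseudoModel P W) :
    ∀ (φ : InqForm P), flatGrade φ = 0 → ∀ (s : Set W),
      (support M φ s ↔ ∀ w ∈ s, support M φ {w}) := by
  intro φ
  induction φ with
  | atom p =>
      intro _ s
      simp only [support]
      constructor
      · intro h w hw; exact Set.singleton_subset_iff.mpr (h hw)
      · intro h w hw; exact (h w hw) rfl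
  | bot =>
      intro _ s
      simp only [support]
      constructor
      · intro h; subst h; intro w hw; exact absurd hw (Set.notMem_empty w)
      · intro h
        ext w
        simp only [Set.mem_empty_iff_false, iff_false]
        intro hw
        have := h w hw
        exact absurd (this ▸ rfl : w ∈ (∅ : Set W)) (Set.notMem_empty w)
  | and φ ψ ihφ ihψ =>
      intro hg s
      simp only [flatGrade, Nat.max_eq_zero_iff] at hg
      simp only [support]
      rw [ihφ hg.1 s, ihψ hg.2 s]
      constructor
      · intro h w hw; exact ⟨h.1 w hw, h.2 w hw⟩
      · intro h; exact ⟨fun w hw => (h w hw).1, fun w hw => (h w hw).2⟩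
  | impl φ ψ ihφ ihψ =>
      intro hg s
      simp only [flatGrade] at hg
      simp only [support]
      constructor
      · intro h w hw t ht hφ
        exact h t (ht.trans (Set.singleton_subset_iff.mpr hw)) hφ
      · intro h t ht hφ
        rw [ihψ hg t]
        intro u hu
        exact h u (ht hu) {u} (subset_refl _)
          (support_persist M φ t {u} (Set.singleton_subset_iff.mpr hu) hφ)
  | ior φ ψ ihφ ihψ =>
      intro hg; simp [flatGrade] at hg
  | box φ ih =>
      intro _ s
      simp only [support]
      constructor
      · intro h w hw u hu; rcases hu with rfl; exact h u hw
      · intro h w hw; exact h w hw w rfl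
  | boxplus φ ih =>
      intro _ s
      simp only [support]
      constructor
      · intro h w hw u hu; rcases hu with rfl; exact h u hw
      · intro h w hw; exact h w hw w rfl

theorem bulk_equiv_flat_equiv {P W V : Type}
    (M : PseudoModel P W) (N : PseudoModel P V) (s : Set W) (s' : Set V)
    (hfwd : ∀ w ∈ s, ∃ v ∈ s', ∀ φ : InqForm P,
      support M φ {w} ↔ support N φ {v})
    (hbwd : ∀ v ∈ s', ∃ w ∈ s, ∀ φ : InqForm P,
      support M φ {w} ↔ support N φ {v}) :
    ∀ φ : InqForm P, flatGrade φ = 0 → (support M φ s ↔ support N φ s') := by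
  intro φ hg
  rw [support_flat M φ hg s, support_flat N φ hg s']
  constructor
  · intro h v hv
    obtain ⟨w, hw, heq⟩ := hbwd v hv
    exact (heq φ).mp (h w hw)
  · intro h w hw
    obtain ⟨v, hv, heq⟩ := hfwd w hw
    exact (heq φ).mpr (h v hv)
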